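/- arXiv:1501.02606 — 2 statements merged into one kernel-verified Lean document; each statement's English description precedes it below -/
import Mathlib

section
/- Let x = (x_n)_{n≥2} be a sequence with x_n ∈ {1,…,n}, let C ≥ 0, and let A ⊆ M_x be a C-net in (M_x, d_x). If n ≥ 2 satisfies e^{n²} ≥ C and e^{x_n} > C/2, then M_{x,n} ⊆ A. -/
noncomputable section

/-- The tree distance on `ℝ²`. -/
def treeDist (p q : ℝ × ℝ) : ℝ :=
  if p.1 = q.1 then |p.2 - q.2| else |p.2| + |p.1 - q.1| + |q.2|

/-- `∑_{i=2}^n e^{i²}`. -/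
def expSum (n : ℕ) : ℝ := ∑ i ∈ Finset.Icc 2 n, Real.exp ((i : ℝ) ^ 2)

/-- `P⁺_{x,n} = (∑_{i=2}^n e^{i²}, e^{x_n})`. -/
def Pp (x : ℕ → ℕ) (n : ℕ) : ℝ × ℝ := (expSum n, Real.exp (x n))

/-- `P⁻_{x,n} = (∑_{i=2}^n e^{i²}, −e^{x_n})`. -/
def Pm (x : ℕ → ℕ) (n : ℕ) : ℝ × ℝ := (expSum n, -Real.exp (x n))

/-- `M_{x,n} = {P⁺_{x,n}, P⁻_{x,n}}`. -/
def Mpart (x : ℕ → ℕ) (n : ℕ) : Set (ℝ × ℝ) := {Pp x n, Pm x n}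

/-- `M_x = ⋃_{n≥2} M_{x,n}`. -/
def Mset (x : ℕ → ℕ) : Set (ℝ × ℝ) := ⋃ n ∈ {m : ℕ | 2 ≤ m}, Mpart x n

/-- `x = (x_n)_{n≥2}` is a sequence with `x_n ∈ {1,…,n}`. -/
def SeqOK (x : ℕ → ℕ) : Prop := ∀ n, 2 ≤ n → 1 ≤ x n ∧ x n ≤ n

/-- `A` is a `C`-net in `(M_x, d_x)`: `A ⊆ M_x` and every point of `M_x` is at
distance (infimum) at most `C` from `A`. -/
def IsNet (x : ℕ → ℕ) (C : ℝ) (A : Set (ℝ × ℝ)) : Prop :=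
  A ⊆ Mset x ∧ ∀ p ∈ Mset x, ∀ ε > 0, ∃ a ∈ A, treeDist p a ≤ C + ε

/-- `φ : A → B` is a `λ`-bi-Lipschitz bijection. -/
def IsBiLipOn (lam : ℝ) (A B : Set (ℝ × ℝ)) (φ : ℝ × ℝ → ℝ × ℝ) : Prop :=
  Set.BijOn φ A B ∧ ∀ p ∈ A, ∀ q ∈ A,
    lam⁻¹ * treeDist p q ≤ treeDist (φ p) (φ q) ∧
    treeDist (φ p) (φ q) ≤ lam * treeDist p q


lemma expSum_gap {m n : ℕ} (hm : 1 ≤ m) (hmn : m < n) :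
    expSum m + Real.exp ((n:ℝ)^2) ≤ expSum n := by
  have hsum : ∑ i ∈ Finset.Ioc 1 m, Real.exp ((i:ℝ)^2)
      + ∑ i ∈ Finset.Ioc m n, Real.exp ((i:ℝ)^2)
      = ∑ i ∈ Finset.Ioc 1 n, Real.exp ((i:ℝ)^2) :=
    Finset.sum_Ioc_consecutive _ hm (le_of_lt hmn)
  have hIcc : ∀ k : ℕ, expSum k = ∑ i ∈ Finset.Ioc 1 k, Real.exp ((i:ℝ)^2) := by
    intro k
    have : Finset.Icc 2 k = Finset.Ioc 1 k := by ext i; simp [Finset.mem_Icc, Finset.mem_Ioc]; omega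
    rw [expSum, this]
  have hsingle : Real.exp ((n:ℝ)^2) ≤ ∑ i ∈ Finset.Ioc m n, Real.exp ((i:ℝ)^2) :=
    Finset.single_le_sum (f := fun i : ℕ => Real.exp ((i:ℝ)^2))
      (fun i _ => (Real.exp_pos _).le) (Finset.mem_Ioc.2 ⟨hmn, le_refl n⟩)
  rw [hIcc m, hIcc n]
  linarith

lemma expSum_gap' {m n : ℕ} (hm : 2 ≤ m) (hn : 2 ≤ n) (hmn : m ≠ n) :
    Real.exp ((n:ℝ)^2) ≤ |expSum n - expSum m| := by
  rcases lt_or_gt_of_ne hmn with h | h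
  · have := expSum_gap (by omega : 1 ≤ m) h
    rw [abs_of_nonneg (by linarith [Real.exp_pos ((n:ℝ)^2)])]
    linarith
  · have := expSum_gap (by omega : 1 ≤ n) h
    have hmono : Real.exp ((n:ℝ)^2) ≤ Real.exp ((m:ℝ)^2) := by
      apply Real.exp_le_exp.2
      have : (n:ℝ) ≤ m := by exact_mod_cast h.le
      nlinarith [Nat.cast_nonneg (α := ℝ) n]
    rw [abs_sub_comm, abs_of_nonneg (by linarith [Real.exp_pos ((m:ℝ)^2)])]
    linarith

lemma expSum_ne {m n : ℕ} (hm : 2 ≤ m) (hn : 2 ≤ n) (hmn : m ≠ n) :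
    expSum n ≠ expSum m := by
  intro h
  have := expSum_gap' hm hn hmn
  rw [h, sub_self, abs_zero] at this
  exact absurd this (not_le.2 (Real.exp_pos _))

/-- If `A ⊆ M_x` is a `C`-net, `e^{n²} ≥ C` and `e^{x_n} > C/2` (with `n ≥ 2`),
then `M_{x,n} ⊆ A`. -/
theorem net_contains_Mpart (x : ℕ → ℕ) (hx : SeqOK x) (C : ℝ) (hC : 0 ≤ C)
    (A : Set (ℝ × ℝ)) (hA : IsNet x C A) (n : ℕ) (hn : 2 ≤ n)
    (h1 : C ≤ Real.exp ((n : ℝ) ^ 2)) (h2 : C / 2 < Real.exp (x n)) :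
    Mpart x n ⊆ A := by
  intro p hp
  set En := Real.exp (x n) with hEn
  have hEnpos : 0 < En := Real.exp_pos _
  set ε := min En (2*En - C) / 2 with hεdef
  have hεpos : 0 < ε := by
    apply div_pos (lt_min hEnpos (by linarith)) two_pos
  have hεE : C + ε < C + En := by
    have h := min_le_left En (2*En - C)
    have : ε < En := by rw [hεdef]; linarith
    linarith
  have hε2 : C + ε < 2*En := by
    have h := min_le_right En (2*En - C)
    have : ε < 2*En - C := by rw [hεdef]; linarith
    linarith
  have hpM : p ∈ Mset x := Set.mem_biUnion hn hp
  obtain ⟨a, haA, hd⟩ := hA.2 p hpM ε hεpos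
  have haM : a ∈ Mset x := hA.1 haA
  obtain ⟨m, hm, ham⟩ : ∃ m, 2 ≤ m ∧ a ∈ Mpart x m := by
    simpa [Mset, Set.mem_iUnion] using haM
  suffices hap : a = p by rwa [← hap]
  -- first coordinates
  have hp1 : p.1 = expSum n := by
    rcases hp with h | h <;> rw [h] <;> rfl
  have ha1 : a.1 = expSum m := by
    rcases ham with h | h <;> rw [h] <;> rfl
  have hp2 : |p.2| = En := by
    rcases hp with h | h <;> rw [h] <;> simp [Pp, Pm, hEn, abs_of_pos (Real.exp_pos _)]
  have hdPpPm : treeDist (Pp x n) (Pm x n) = 2 * En := by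
    rw [treeDist, Pp, Pm, if_pos rfl]
    show |Real.exp (x n) - -Real.exp (x n)| = 2 * En
    rw [show Real.exp ((x n : ℕ) : ℝ) - -Real.exp ((x n : ℕ) : ℝ)
        = 2 * Real.exp ((x n : ℕ) : ℝ) by ring, abs_of_pos (by positivity), hEn]
  have hdPmPp : treeDist (Pm x n) (Pp x n) = 2 * En := by
    rw [treeDist, Pm, Pp, if_pos rfl]
    show |-Real.exp (x n) - Real.exp (x n)| = 2 * En
    rw [show -Real.exp ((x n : ℕ) : ℝ) - Real.exp ((x n : ℕ) : ℝ)
        = -(2 * Real.exp ((x n : ℕ) : ℝ)) by ring, abs_neg,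
      abs_of_pos (by positivity), hEn]
  simp only [Mpart, Set.mem_insert_iff, Set.mem_singleton_iff] at hp ham
  by_cases hmn : m = n
  · -- same column
    subst hmn
    rcases hp with hP | hP <;> rcases ham with hQ | hQ
    · rw [hP, hQ]
    · exfalso; rw [hP, hQ, hdPpPm] at hd; linarith
    · exfalso; rw [hP, hQ, hdPmPp] at hd; linarith
    · rw [hP, hQ]
  · -- different column
    exfalso
    have hne : p.1 ≠ a.1 := by
      rw [hp1, ha1]; exact expSum_ne hm hn hmn
    have hdist : treeDist p a = |p.2| + |p.1 - a.1| + |a.2| := by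
      rw [treeDist, if_neg hne]
    have hgap : Real.exp ((n:ℝ)^2) ≤ |p.1 - a.1| := by
      rw [hp1, ha1]; exact expSum_gap' hm hn hmn
    have ha2 : 0 ≤ |a.2| := abs_nonneg _
    rw [hdist, hp2] at hd
    linarith
end
end

section
/- Let x = (x_n)_{n≥2} and y = (y_n)_{n≥2} be sequences with x_n, y_n ∈ {1,…,n}. Suppose there exist C ≥ 0, λ ≥ 1, a C-net A ⊆ M_x with P⁺_{x,2} ∈ A, a C-net B ⊆ M_y with P⁺_{y,2} ∈ B, and a λ-bi-Lipschitz bijection φ : A → B with φ(P⁺_{x,2}) = P⁺_{y,2}. Then sup_{n≥2} |x_n − y_n| < ∞. -/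
noncomputable section

/-!
Column `n` of `M_x` lies over the abscissa `S_n = ∑_{i=2}^n e^{i²}`, so its points are at distance
between `e^{n²}` and `(n + 2) e^{n²}` from the basepoint, and distinct columns are `e^{n²}` apart.
Since `λ (n + 1) e^{(n-1)²} < e^{n²}` once `n > λ`, a pointed `λ`-bi-Lipschitz bijection maps the
points of `A` in column `n` exactly onto the points of `B` in column `n`. Once `e^{n²} > C + 1`,
a `C`-net meets column `n` of `M_x` either in both points, which are `2 e^{x_n}` apart, or in a
single point, and then `2 e^{x_n} ≤ C + 1`. If one of the nets has both points, so does the other,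
and comparing `2 e^{x_n}` with `2 e^{y_n}` gives `|x_n - y_n| ≤ log λ`; otherwise `|x_n - y_n| ≤ C`.
-/

open Real Set

lemma treeDist_comm (p q : ℝ × ℝ) : treeDist p q = treeDist q p := by
  unfold treeDist
  split_ifs with h h' h'
  · exact abs_sub_comm _ _
  · exact absurd h.symm h'
  · exact absurd h'.symm h
  · rw [abs_sub_comm]; ring

lemma abs_fst_sub_le_treeDist (p q : ℝ × ℝ) : |p.1 - q.1| ≤ treeDist p q := by
  unfold treeDist
  split_ifs with h
  · simp [h]
  · linarith [abs_nonneg p.2, abs_nonneg q.2]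

lemma treeDist_le (p q : ℝ × ℝ) : treeDist p q ≤ |p.2| + |p.1 - q.1| + |q.2| := by
  unfold treeDist
  split_ifs
  · linarith [abs_sub p.2 q.2, abs_nonneg (p.1 - q.1)]
  · exact le_rfl

lemma expSum_nonneg (n : ℕ) : 0 ≤ expSum n :=
  Finset.sum_nonneg fun _ _ => (exp_pos _).le

lemma expSum_le_expSum {m n : ℕ} (hmn : m ≤ n) : expSum m ≤ expSum n :=
  Finset.sum_le_sum_of_subset_of_nonneg (Finset.Icc_subset_Icc_right hmn)
    fun _ _ _ => (exp_pos _).le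

lemma expSum_add_exp_sq_le {m n : ℕ} (hmn : m < n) (hn : 2 ≤ n) :
    expSum m + exp ((n : ℝ) ^ 2) ≤ expSum n := by
  have hsub : insert n (Finset.Icc 2 m) ⊆ Finset.Icc 2 n := by
    intro i hi
    simp only [Finset.mem_insert, Finset.mem_Icc] at hi ⊢
    omega
  have hn_notMem : n ∉ Finset.Icc 2 m := by simp; omega
  calc expSum m + exp ((n : ℝ) ^ 2)
      = ∑ i ∈ insert n (Finset.Icc 2 m), exp ((i : ℝ) ^ 2) := by
        rw [Finset.sum_insert hn_notMem, add_comm, expSum]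
    _ ≤ expSum n :=
        Finset.sum_le_sum_of_subset_of_nonneg hsub fun _ _ _ => (exp_pos _).le

lemma expSum_le (n : ℕ) : expSum n ≤ n * exp ((n : ℝ) ^ 2) := by
  calc expSum n ≤ (Finset.Icc 2 n).card • exp ((n : ℝ) ^ 2) := by
        refine Finset.sum_le_card_nsmul _ _ _ fun i hi => exp_le_exp.mpr ?_
        have : (i : ℝ) ≤ n := by exact_mod_cast (Finset.mem_Icc.mp hi).2
        gcongr
    _ ≤ n * exp ((n : ℝ) ^ 2) := by
        rw [nsmul_eq_mul, Nat.card_Icc]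
        gcongr
        exact_mod_cast (by omega : n + 1 - 2 ≤ n)

lemma exp_sq_le_abs_expSum_sub {m n : ℕ} (hn : 2 ≤ n) (hmn : m ≠ n) :
    exp ((n : ℝ) ^ 2) ≤ |expSum n - expSum m| := by
  rcases hmn.lt_or_gt with hlt | hgt
  · have hgap := expSum_add_exp_sq_le hlt hn
    rw [abs_of_nonneg (by linarith [exp_pos ((n : ℝ) ^ 2)])]
    linarith
  · have hgap := expSum_add_exp_sq_le hgt (by omega)
    have hsq : exp ((n : ℝ) ^ 2) ≤ exp ((m : ℝ) ^ 2) := by gcongr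
    rw [abs_sub_comm, abs_of_nonneg (by linarith [exp_pos ((m : ℝ) ^ 2)])]
    linarith

lemma mem_Mset_iff {x : ℕ → ℕ} {p : ℝ × ℝ} : p ∈ Mset x ↔ ∃ n, 2 ≤ n ∧ p ∈ Mpart x n := by
  simp [Mset]

lemma fst_eq_and_abs_snd_eq_of_mem_Mpart {x : ℕ → ℕ} {n : ℕ} {p : ℝ × ℝ}
    (hp : p ∈ Mpart x n) : p.1 = expSum n ∧ |p.2| = exp (x n) := by
  rcases hp with rfl | rfl <;> simp [Pp, Pm]

lemma treeDist_Pp_Pm (x : ℕ → ℕ) (n : ℕ) : treeDist (Pp x n) (Pm x n) = 2 * exp (x n) := by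
  simp only [treeDist, Pp, Pm, if_true, sub_neg_eq_add]
  rw [abs_of_pos (by positivity)]
  ring

lemma treeDist_of_mem_Mpart_of_ne {x : ℕ → ℕ} {n : ℕ} {p q : ℝ × ℝ} (hp : p ∈ Mpart x n)
    (hq : q ∈ Mpart x n) (hpq : p ≠ q) : treeDist p q = 2 * exp (x n) := by
  rcases hp with rfl | rfl <;> rcases hq with rfl | rfl
  · exact absurd rfl hpq
  · exact treeDist_Pp_Pm x n
  · rw [treeDist_comm, treeDist_Pp_Pm]
  · exact absurd rfl hpq

lemma exp_sq_le_treeDist_of_mem_Mpart {x y : ℕ → ℕ} {m n : ℕ} (hn : 2 ≤ n) (hmn : m ≠ n)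
    {p q : ℝ × ℝ} (hp : p ∈ Mpart x n) (hq : q ∈ Mpart y m) : exp ((n : ℝ) ^ 2) ≤ treeDist p q := by
  have hp1 := (fst_eq_and_abs_snd_eq_of_mem_Mpart hp).1
  have hq1 := (fst_eq_and_abs_snd_eq_of_mem_Mpart hq).1
  calc exp ((n : ℝ) ^ 2) ≤ |expSum n - expSum m| := exp_sq_le_abs_expSum_sub hn hmn
    _ = |p.1 - q.1| := by rw [hp1, hq1]
    _ ≤ treeDist p q := abs_fst_sub_le_treeDist p q

lemma exp_le_exp_sq {x : ℕ → ℕ} (hx : SeqOK x) {n : ℕ} (hn : 2 ≤ n) :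
    exp (x n) ≤ exp ((n : ℝ) ^ 2) := by
  gcongr
  have h1 : (x n : ℝ) ≤ n := by exact_mod_cast (hx n hn).2
  have h2 : (2 : ℝ) ≤ n := by exact_mod_cast hn
  nlinarith

lemma treeDist_Pp_two_le {x : ℕ → ℕ} (hx : SeqOK x) {n : ℕ} (hn : 2 ≤ n) {p : ℝ × ℝ}
    (hp : p ∈ Mpart x n) : treeDist p (Pp x 2) ≤ (n + 2) * exp ((n : ℝ) ^ 2) := by
  obtain ⟨hp1, hp2⟩ := fst_eq_and_abs_snd_eq_of_mem_Mpart hp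
  have hfst : |p.1 - (Pp x 2).1| ≤ n * exp ((n : ℝ) ^ 2) := by
    rw [hp1, show (Pp x 2).1 = expSum 2 from rfl,
      abs_of_nonneg (sub_nonneg.mpr (expSum_le_expSum hn))]
    linarith [expSum_le n, expSum_nonneg 2]
  have hbase : |(Pp x 2).2| ≤ exp ((n : ℝ) ^ 2) := by
    have h2 : exp ((2 : ℕ) ^ 2 : ℝ) ≤ exp ((n : ℝ) ^ 2) := by gcongr
    simp only [Pp, abs_exp]
    linarith [exp_le_exp_sq hx le_rfl]
  linarith [treeDist_le p (Pp x 2), exp_le_exp_sq hx hn]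

lemma mul_exp_sq_lt_exp_sq {lam : ℝ} {m n : ℕ} (hmn : m < n) (hlam : lam < n) :
    lam * ((m + 2) * exp ((m : ℝ) ^ 2)) < exp ((n : ℝ) ^ 2) := by
  have hmn' : (m : ℝ) + 1 ≤ n := by exact_mod_cast hmn
  calc lam * ((m + 2) * exp ((m : ℝ) ^ 2)) < n * ((m + 2) * exp ((m : ℝ) ^ 2)) := by
        gcongr
    _ ≤ exp ((n : ℝ) - 1) * (exp (n : ℝ) * exp (((n : ℝ) - 1) ^ 2)) := by
        gcongr
        · linarith [add_one_le_exp ((n : ℝ) - 1)]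
        · linarith [add_one_le_exp (n : ℝ)]
        · nlinarith [(m.cast_nonneg : (0 : ℝ) ≤ m)]
    _ = exp ((n : ℝ) ^ 2) := by rw [← exp_add, ← exp_add]; ring_nf

lemma le_of_treeDist_Pp_two_le_mul {x y : ℕ → ℕ} (hy : SeqOK y) {lam : ℝ} (hlam : 0 ≤ lam)
    {m n : ℕ} (hm : 2 ≤ m) (hn : 3 ≤ n) (hlamn : lam < n) {a b : ℝ × ℝ}
    (ha : a ∈ Mpart x n) (hb : b ∈ Mpart y m)
    (hab : treeDist a (Pp x 2) ≤ lam * treeDist b (Pp y 2)) : n ≤ m := by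
  by_contra! hmn
  have hlower : exp ((n : ℝ) ^ 2) ≤ treeDist a (Pp x 2) :=
    exp_sq_le_treeDist_of_mem_Mpart (by omega) (by omega) ha (Or.inl rfl : Pp x 2 ∈ Mpart x 2)
  have hupper := mul_le_mul_of_nonneg_left (treeDist_Pp_two_le hy hm hb) hlam
  linarith [mul_exp_sq_lt_exp_sq hmn hlamn]

lemma eq_of_treeDist_Pp_two_le_mul {x y : ℕ → ℕ} (hx : SeqOK x) (hy : SeqOK y) {lam : ℝ}
    (hlam : 0 ≤ lam) {m n : ℕ} (hm : 2 ≤ m) (hn : 3 ≤ n) (hlamn : lam < n) {a b : ℝ × ℝ}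
    (ha : a ∈ Mpart x n) (hb : b ∈ Mpart y m)
    (hab : treeDist a (Pp x 2) ≤ lam * treeDist b (Pp y 2))
    (hba : treeDist b (Pp y 2) ≤ lam * treeDist a (Pp x 2)) : m = n := by
  have hnm := le_of_treeDist_Pp_two_le_mul hy hlam hm hn hlamn ha hb hab
  by_contra hmn
  have hlamm : lam < m := hlamn.trans_le (by exact_mod_cast hnm)
  have := le_of_treeDist_Pp_two_le_mul hx hlam (by omega) (by omega) hlamm hb ha hba
  omega

lemma IsNet.exists_mem_Mpart_treeDist_le {x : ℕ → ℕ} {C : ℝ} {A : Set (ℝ × ℝ)}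
    (hA : IsNet x C A) {n : ℕ} (hn : 2 ≤ n) (hC : C + 1 < exp ((n : ℝ) ^ 2)) {p : ℝ × ℝ}
    (hp : p ∈ Mpart x n) : ∃ a ∈ A ∩ Mpart x n, treeDist p a ≤ C + 1 := by
  obtain ⟨a, haA, hpa⟩ := hA.2 p (mem_Mset_iff.mpr ⟨n, hn, hp⟩) 1 one_pos
  obtain ⟨m, -, ham⟩ := mem_Mset_iff.mp (hA.1 haA)
  obtain rfl : m = n := by
    by_contra hmn
    linarith [exp_sq_le_treeDist_of_mem_Mpart hn hmn hp ham]
  exact ⟨a, ⟨haA, ham⟩, hpa⟩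

lemma IsNet.nontrivial_or_two_mul_exp_le {x : ℕ → ℕ} {C : ℝ} {A : Set (ℝ × ℝ)}
    (hA : IsNet x C A) {n : ℕ} (hn : 2 ≤ n) (hC : C + 1 < exp ((n : ℝ) ^ 2)) :
    (A ∩ Mpart x n).Nontrivial ∨ 2 * exp (x n) ≤ C + 1 := by
  obtain ⟨a, ha, hPpa⟩ := hA.exists_mem_Mpart_treeDist_le hn hC (Or.inl rfl)
  obtain ⟨a', ha', hPma'⟩ := hA.exists_mem_Mpart_treeDist_le hn hC (Or.inr rfl)
  by_cases haa' : a = a'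
  · subst haa'
    right
    rcases ha.2 with rfl | rfl
    · rwa [treeDist_comm, treeDist_Pp_Pm] at hPma'
    · rwa [treeDist_Pp_Pm] at hPpa
  · exact Or.inl ⟨a, ha, a', ha', haa'⟩

lemma IsBiLipOn.treeDist_le_mul {lam : ℝ} {A B : Set (ℝ × ℝ)} {φ : ℝ × ℝ → ℝ × ℝ}
    (hφ : IsBiLipOn lam A B φ) (hlam : 0 < lam) {p q : ℝ × ℝ} (hp : p ∈ A) (hq : q ∈ A) :
    treeDist p q ≤ lam * treeDist (φ p) (φ q) :=
  (inv_mul_le_iff₀ hlam).mp (hφ.2 p hp q hq).1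

lemma abs_sub_le_log_of_exp_le_mul {s t lam : ℝ} (hlam : 0 < lam) (hst : exp s ≤ lam * exp t)
    (hts : exp t ≤ lam * exp s) : |s - t| ≤ log lam := by
  rw [abs_sub_le_iff, le_log_iff_exp_le hlam, le_log_iff_exp_le hlam, exp_sub, exp_sub,
    div_le_iff₀ (exp_pos t), div_le_iff₀ (exp_pos s)]
  exact ⟨hst, hts⟩

section BiLipschitz

variable {x y : ℕ → ℕ} {C lam : ℝ} {A B : Set (ℝ × ℝ)} {φ : ℝ × ℝ → ℝ × ℝ} {n : ℕ}

lemma IsBiLipOn.abs_sub_le_log (hφ : IsBiLipOn lam A B φ) (hlam : 0 < lam)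
    (hmaps : MapsTo φ (A ∩ Mpart x n) (B ∩ Mpart y n)) (hA : (A ∩ Mpart x n).Nontrivial) :
    |(x n : ℝ) - y n| ≤ log lam := by
  obtain ⟨a, ha, a', ha', hne⟩ := hA
  have hφne : φ a ≠ φ a' := fun h => hne (hφ.1.injOn ha.1 ha'.1 h)
  have hdist := treeDist_of_mem_Mpart_of_ne ha.2 ha'.2 hne
  have hφdist := treeDist_of_mem_Mpart_of_ne (hmaps ha).2 (hmaps ha').2 hφne
  have hle := hφ.treeDist_le_mul hlam ha.1 ha'.1
  have hge := (hφ.2 a ha.1 a' ha'.1).2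
  rw [hdist, hφdist] at hle hge
  exact abs_sub_le_log_of_exp_le_mul hlam (by linarith) (by linarith)

variable (hx : SeqOK x) (hy : SeqOK y) (hφ : IsBiLipOn lam A B φ) (hbase : Pp x 2 ∈ A)
  (hφbase : φ (Pp x 2) = Pp y 2) (hlam : 0 < lam) (hn : 3 ≤ n) (hlamn : lam < n)
include hx hy hφ hbase hφbase hlam hn hlamn

lemma IsBiLipOn.mapsTo_inter_Mpart (hB : B ⊆ Mset y) :
    MapsTo φ (A ∩ Mpart x n) (B ∩ Mpart y n) := by
  intro a ha
  have hφa : φ a ∈ B := hφ.1.mapsTo ha.1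
  obtain ⟨m, hm, hφam⟩ := mem_Mset_iff.mp (hB hφa)
  have hle := hφ.treeDist_le_mul hlam ha.1 hbase
  have hge := (hφ.2 a ha.1 _ hbase).2
  rw [hφbase] at hle hge
  obtain rfl := eq_of_treeDist_Pp_two_le_mul hx hy hlam.le hm hn hlamn ha.2 hφam hle hge
  exact ⟨hφa, hφam⟩

lemma IsBiLipOn.surjOn_inter_Mpart (hA : A ⊆ Mset x) :
    SurjOn φ (A ∩ Mpart x n) (B ∩ Mpart y n) := by
  intro b hb
  obtain ⟨a, haA, rfl⟩ := hφ.1.surjOn hb.1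
  obtain ⟨m, hm, ham⟩ := mem_Mset_iff.mp (hA haA)
  have hle := hφ.treeDist_le_mul hlam haA hbase
  have hge := (hφ.2 a haA _ hbase).2
  rw [hφbase] at hle hge
  obtain rfl := eq_of_treeDist_Pp_two_le_mul hy hx hlam.le hm hn hlamn hb.2 ham hge hle
  exact ⟨a, ⟨haA, ham⟩, rfl⟩

lemma abs_sub_le_of_isBiLipOn (hAnet : IsNet x C A) (hBnet : IsNet y C B) (hCn : C < n) :
    |(x n : ℝ) - y n| ≤ max (log lam) C := by
  have hC : C + 1 < exp ((n : ℝ) ^ 2) := by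
    have hn' : (3 : ℝ) ≤ n := by exact_mod_cast hn
    have : (n : ℝ) ≤ (n : ℝ) ^ 2 := by nlinarith
    linarith [add_one_le_exp ((n : ℝ) ^ 2)]
  have hmaps := hφ.mapsTo_inter_Mpart hx hy hbase hφbase hlam hn hlamn hBnet.1
  rcases hAnet.nontrivial_or_two_mul_exp_le (by omega) hC with hAn | hxn
  · exact (hφ.abs_sub_le_log hlam hmaps hAn).trans (le_max_left _ _)
  rcases hBnet.nontrivial_or_two_mul_exp_le (by omega) hC with hBn | hyn
  · have hsurj := hφ.surjOn_inter_Mpart hx hy hbase hφbase hlam hn hlamn hAnet.1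
    exact (hφ.abs_sub_le_log hlam hmaps (nontrivial_of_image φ _ (hBn.mono hsurj))).trans
      (le_max_left _ _)
  · refine (abs_sub_le_iff.mpr ⟨?_, ?_⟩).trans (le_max_right _ _) <;>
      linarith [add_one_le_exp (x n : ℝ), add_one_le_exp (y n : ℝ),
        (Nat.cast_nonneg (x n) : (0 : ℝ) ≤ x n), (Nat.cast_nonneg (y n) : (0 : ℝ) ≤ y n)]

end BiLipschitz

lemma abs_sub_le_of_seqOK {x y : ℕ → ℕ} (hx : SeqOK x) (hy : SeqOK y) {n : ℕ} (hn : 2 ≤ n) :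
    |(x n : ℝ) - y n| ≤ n := by
  have hxn : (x n : ℝ) ≤ n := by exact_mod_cast (hx n hn).2
  have hyn : (y n : ℝ) ≤ n := by exact_mod_cast (hy n hn).2
  rw [abs_sub_le_iff]
  constructor <;> linarith [(Nat.cast_nonneg (x n) : (0 : ℝ) ≤ x n),
    (Nat.cast_nonneg (y n) : (0 : ℝ) ≤ y n)]

/-- Claim 3 of the paper: if there is a pointed `λ`-bi-Lipschitz bijection between
pointed `C`-nets of `M_x` and `M_y`, then `sup_{n≥2} |x_n − y_n| < ∞`. -/
theorem bounded_diff_of_biLip (x y : ℕ → ℕ) (hx : SeqOK x) (hy : SeqOK y)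
    (h : ∃ (C lam : ℝ) (A B : Set (ℝ × ℝ)) (φ : ℝ × ℝ → ℝ × ℝ),
      0 ≤ C ∧ 1 ≤ lam ∧ IsNet x C A ∧ Pp x 2 ∈ A ∧ IsNet y C B ∧ Pp y 2 ∈ B ∧
      IsBiLipOn lam A B φ ∧ φ (Pp x 2) = Pp y 2) :
    ∃ D : ℝ, ∀ n, 2 ≤ n → |(x n : ℝ) - (y n : ℝ)| ≤ D := by
  obtain ⟨C, lam, A, B, φ, -, hlam, hAnet, hbase, hBnet, -, hφ, hφbase⟩ := h
  have hlam0 : 0 < lam := by linarith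
  refine ⟨max 3 (max lam C), fun n hn => ?_⟩
  by_cases hlarge : max 3 (max lam C) < n
  · simp only [max_lt_iff] at hlarge
    obtain ⟨hn3, hlamn, hCn⟩ := hlarge
    have hlog : log lam ≤ lam := by linarith [log_le_sub_one_of_pos hlam0]
    refine (abs_sub_le_of_isBiLipOn hx hy hφ hbase hφbase hlam0 (by exact_mod_cast hn3.le)
      hlamn hAnet hBnet hCn).trans ?_
    exact max_le (le_max_of_le_right (le_max_of_le_left hlog))
      (le_max_of_le_right (le_max_right _ _))
  · exact (abs_sub_le_of_seqOK hx hy hn).trans (not_lt.mp hlarge)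
end
end
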